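/- arXiv:1806.01821 — 2 statements merged into one kernel-verified Lean document; each statement's English description precedes it below -/
import Mathlib

section
/- Let H and G be finite simple graphs with H ⊴ G and |G| − |H| > 2. Then the interval [H,G] is disconnected if and only if [H,G] is strongly zero-split. -/
open SimpleGraph

/-- A finite simple graph, encoded by its number of vertices together with a
simple graph structure on `Fin n`. -/
def FinGraph : Type := Σ n : ℕ, SimpleGraph (Fin n)

namespace FinGraph

/-- The number of vertices of a graph. -/
def order (G : FinGraph) : ℕ := G.1

/-- Induced containment `H ⊴ G`: there is an injection of the vertices of `H`
into the vertices of `G` which preserves and reflects adjacency (equivalently,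
`H` is isomorphic to an induced subgraph of `G`). -/
def Contains (H G : FinGraph) : Prop :=
  ∃ f : Fin H.1 ↪ Fin G.1, ∀ a b : Fin H.1, G.2.Adj (f a) (f b) ↔ H.2.Adj a b

/-- Isomorphism of finite graphs. -/
def Iso (H G : FinGraph) : Prop := Nonempty (H.2 ≃g G.2)

/-- Package a simple graph on an arbitrary finite vertex type as a `FinGraph`. -/
noncomputable def of {V : Type} [Fintype V] (G : SimpleGraph V) : FinGraph :=
  ⟨Fintype.card V, G.comap ⇑(Fintype.equivFin V).symm⟩

end FinGraph

/-- `X` lies strictly between `H` and `G` in the induced containment order. -/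
def StrictlyBetween (H G X : FinGraph) : Prop :=
  H.Contains X ∧ X.Contains G ∧ ¬ X.Iso H ∧ ¬ X.Iso G

/-- The interval `[H,G]` is disconnected: the collection of graphs lying strictly
between `H` and `G` splits into two nonempty disjoint classes, each closed under
isomorphism and jointly exhaustive, such that no member of one class is
induced-contained in a member of the other. -/
def IntervalDisconnected (H G : FinGraph) : Prop :=
  ∃ A B : Set FinGraph,
    A.Nonempty ∧ B.Nonempty ∧ Disjoint A B ∧
    (∀ X : FinGraph, X ∈ A ∪ B ↔ StrictlyBetween H G X) ∧
    (∀ X ∈ A, ∀ Y : FinGraph, X.Iso Y → Y ∈ A) ∧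
    (∀ X ∈ B, ∀ Y : FinGraph, X.Iso Y → Y ∈ B) ∧
    (∀ X ∈ A, ∀ Y ∈ B, ¬ X.Contains Y ∧ ¬ Y.Contains X)

/-- `η` is an occurrence of `H` in `G`: the induced subgraph of `G` on `η` is
isomorphic to `H`. -/
def IsOccurrence (H G : FinGraph) (η : Finset (Fin G.1)) : Prop :=
  Nonempty (G.2.induce (↑η : Set (Fin G.1)) ≃g H.2)

/-- The interval `[H,G]` is strongly zero-split: the set of occurrences of `H` in
`G` can be partitioned into two nonempty disjoint sets `A` and `B` such that the
union of the complements `Z(η) = V(G) ∖ η` over `A` is disjoint from that over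
`B`, and there are no `η ∈ A`, `φ ∈ B` and vertices `i ∈ Z(η)`, `j ∈ Z(φ)` with
the induced subgraphs on `η ∪ {i}` and `φ ∪ {j}` isomorphic. -/
def StronglyZeroSplit (H G : FinGraph) : Prop :=
  ∃ A B : Set (Finset (Fin G.1)),
    A.Nonempty ∧ B.Nonempty ∧ Disjoint A B ∧
    (∀ η : Finset (Fin G.1), η ∈ A ∪ B ↔ IsOccurrence H G η) ∧
    ((⋃ η ∈ A, (↑η : Set (Fin G.1))ᶜ) ∩ (⋃ φ ∈ B, (↑φ : Set (Fin G.1))ᶜ) = ∅) ∧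
    ¬ ∃ η ∈ A, ∃ φ ∈ B, ∃ i ∉ η, ∃ j ∉ φ,
        Nonempty (G.2.induce (↑(insert i η) : Set (Fin G.1)) ≃g
                  G.2.induce (↑(insert j φ) : Set (Fin G.1)))

/-!
Both directions transport a splitting along the correspondence between occurrences of `H` and
graphs strictly between `H` and `G`: an occurrence `η` is sent to its one-vertex extensions
`G[η ∪ {i}]`, a graph `X` strictly between to the occurrences of `H` inside copies of `X` in `G`.

Given a strong zero-split `(A, B)`, call `X` an `A`-graph if some copy of `X` contains an
occurrence from `A`. No `X` is both an `A`- and a `B`-graph: move the `A`-occurrence into the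
copy of `X` carrying the `B`-occurrence. If the moved occurrence is in `A`, any vertex outside
that copy lies in the zero sets of both sides; if it is in `B`, adding corresponding vertices of
`X` to it and to the original `A`-occurrence gives isomorphic extensions. If an `A`-graph `X`
were contained in a `B`-graph `Y`, an occurrence inside a copy of `X` within a copy of `Y` would
make `X` a `B`-graph or `Y` an `A`-graph; hence the two classes disconnect the interval.

Conversely, given a disconnection `(C, D)`, comparable graphs lie in the same class. Because
`|G| - |H| > 2`, all one-vertex extensions of an occurrence `η` lie below a common two-vertex
extension, so every `G[S]` with `η ⊊ S ⊊ V(G)` lies in one class, which is the side of `η`.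
Taking `S = V(G) ∖ {v}` shows that the zero sets of the two sides are disjoint.
-/

namespace SimpleGraph.Embedding

variable {V W : Type*} {G : SimpleGraph V} {G' : SimpleGraph W}

noncomputable def induceMapIso (f : G ↪g G') (s : Finset V) :
    G'.induce ↑(s.map f.toEmbedding) ≃g G.induce ↑s :=
  RelIso.symm
    { toEquiv := (Equiv.Set.image f ↑s f.injective).trans
        (Equiv.setCongr (Finset.coe_map f.toEmbedding s).symm)
      map_rel_iff' := f.map_rel_iff }

end SimpleGraph.Embedding

namespace FinGraph

variable {H G X Y : FinGraph}

theorem contains_of_embedding (e : H.2 ↪g G.2) : H.Contains G :=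
  ⟨e.toEmbedding, fun _ _ => e.map_rel_iff⟩

theorem contains_iff_nonempty_embedding : H.Contains G ↔ Nonempty (H.2 ↪g G.2) :=
  ⟨fun ⟨f, hf⟩ => ⟨⟨f, fun {a b} => hf a b⟩⟩, fun ⟨e⟩ => contains_of_embedding e⟩

theorem contains_refl (G : FinGraph) : G.Contains G :=
  contains_of_embedding (RelEmbedding.refl _)

theorem Contains.trans (h : H.Contains G) (h' : G.Contains X) : H.Contains X := by
  obtain ⟨e⟩ := contains_iff_nonempty_embedding.1 h
  obtain ⟨e'⟩ := contains_iff_nonempty_embedding.1 h'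
  exact contains_of_embedding (e'.comp e)

theorem Iso.symm (h : H.Iso G) : G.Iso H :=
  h.elim fun e => ⟨e.symm⟩

theorem Iso.contains (h : H.Iso G) : H.Contains G :=
  h.elim fun e => contains_of_embedding e.toEmbedding

theorem Contains.order_le (h : H.Contains G) : H.order ≤ G.order := by
  simpa [order] using Fintype.card_le_of_embedding h.choose

theorem Contains.iso_of_order_eq (h : H.Contains G) (hc : H.order = G.order) : H.Iso G := by
  obtain ⟨f, hf⟩ := h
  have hbij : Function.Bijective f :=
    (Fintype.bijective_iff_injective_and_card f).2 ⟨f.injective, by simpa [order] using hc⟩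
  exact ⟨⟨Equiv.ofBijective f hbij, fun {a b} => hf a b⟩⟩

theorem Iso.order_eq (h : H.Iso G) : H.order = G.order :=
  h.contains.order_le.antisymm h.symm.contains.order_le

theorem strictlyBetween_iff :
    StrictlyBetween H G X ↔
      H.Contains X ∧ X.Contains G ∧ H.order < X.order ∧ X.order < G.order := by
  refine ⟨fun ⟨hHX, hXG, hXH, hXG'⟩ => ⟨hHX, hXG, ?_, ?_⟩,
    fun ⟨hHX, hXG, h₁, h₂⟩ => ⟨hHX, hXG, ?_, ?_⟩⟩
  · exact hHX.order_le.lt_of_ne fun h => hXH (hHX.iso_of_order_eq h).symm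
  · exact hXG.order_le.lt_of_ne fun h => hXG' (hXG.iso_of_order_eq h)
  · exact fun h => h₁.ne' h.order_eq
  · exact fun h => h₂.ne h.order_eq

theorem exists_notMem_of_card_lt_order {s : Finset (Fin G.1)} (h : s.card < G.order) :
    ∃ i, i ∉ s := by
  obtain ⟨i, -, hi⟩ := Finset.exists_mem_notMem_of_card_lt_card (s := s) (t := Finset.univ)
    (by simpa [order] using h)
  exact ⟨i, hi⟩

noncomputable def ofIso {V : Type} [Fintype V] (K : SimpleGraph V) : (of K).2 ≃g K :=
  SimpleGraph.Iso.comap (Fintype.equivFin V).symm K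

noncomputable def induce (G : FinGraph) (S : Finset (Fin G.1)) : FinGraph :=
  of (G.2.induce ↑S)

noncomputable def induceEmbedding (G : FinGraph) (S : Finset (Fin G.1)) :
    (G.induce S).2 ↪g G.2 :=
  (Embedding.induce _).comp (ofIso _).toEmbedding

theorem order_induce (S : Finset (Fin G.1)) : (G.induce S).order = S.card := by
  simp [induce, order, of]

theorem induce_contains (S : Finset (Fin G.1)) : (G.induce S).Contains G :=
  contains_of_embedding (G.induceEmbedding S)

theorem induce_contains_induce {S T : Finset (Fin G.1)} (h : S ⊆ T) :
    (G.induce S).Contains (G.induce T) :=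
  contains_of_embedding <| (ofIso _).symm.toEmbedding.comp <|
    (G.2.induceHomOfLE (by exact_mod_cast h)).comp (ofIso _).toEmbedding

theorem induce_map_contains (e : X.2 ↪g G.2) (s : Finset (Fin X.1)) :
    (G.induce (s.map e.toEmbedding)).Contains X :=
  contains_of_embedding <|
    (Embedding.induce (s : Set (Fin X.1))).comp ((e.induceMapIso s).comp (ofIso _)).toEmbedding

theorem exists_map_induceEmbedding_eq {S η : Finset (Fin G.1)} (h : η ⊆ S) :
    ∃ s : Finset (Fin (G.induce S).1), s.map (G.induceEmbedding S).toEmbedding = η := by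
  have hη : η ⊆ Finset.univ.map (G.induceEmbedding S).toEmbedding := fun x hx =>
    Finset.mem_map.2 ⟨(ofIso _).symm ⟨x, h hx⟩, Finset.mem_univ _,
      congrArg Subtype.val ((ofIso _).apply_symm_apply _)⟩
  obtain ⟨s, -, hs⟩ := Finset.subset_map_iff.1 hη
  exact ⟨s, hs.symm⟩

variable {η : Finset (Fin G.1)}

theorem _root_.IsOccurrence.card (h : IsOccurrence H G η) : η.card = H.order := by
  obtain ⟨e⟩ := h
  simpa [order] using Fintype.card_congr e.toEquiv

theorem _root_.IsOccurrence.iso_induce (h : IsOccurrence H G η) : (G.induce η).Iso H :=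
  h.elim fun e => ⟨(ofIso _).trans e⟩

theorem isOccurrence_map_iff (e : X.2 ↪g G.2) (s : Finset (Fin X.1)) :
    IsOccurrence H G (s.map e.toEmbedding) ↔ IsOccurrence H X s :=
  ⟨fun ⟨g⟩ => ⟨(e.induceMapIso s).symm.trans g⟩, fun ⟨g⟩ => ⟨(e.induceMapIso s).trans g⟩⟩

theorem exists_isOccurrence (h : H.Contains X) : ∃ s, IsOccurrence H X s := by
  obtain ⟨f⟩ := contains_iff_nonempty_embedding.1 h
  refine ⟨Finset.univ.map f.toEmbedding, ⟨(f.induceMapIso _).trans ?_⟩⟩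
  rw [Finset.coe_univ]
  exact H.2.induceUnivIso

theorem strictlyBetween_induce {S : Finset (Fin G.1)} (hη : IsOccurrence H G η) (hηS : η ⊆ S)
    (h₁ : H.order < S.card) (h₂ : S.card < G.order) : StrictlyBetween H G (G.induce S) :=
  strictlyBetween_iff.2 ⟨hη.iso_induce.symm.contains.trans (induce_contains_induce hηS),
    induce_contains S, by rwa [order_induce], by rwa [order_induce]⟩

theorem _root_.StrictlyBetween.of_iso (hX : StrictlyBetween H G X) (g : X.Iso Y) :
    StrictlyBetween H G Y := by
  obtain ⟨hHX, hXG, h₁, h₂⟩ := strictlyBetween_iff.1 hX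
  exact strictlyBetween_iff.2
    ⟨hHX.trans g.contains, g.symm.contains.trans hXG, g.order_eq ▸ h₁, g.order_eq ▸ h₂⟩

structure IsZeroSplitting (H G : FinGraph) (A B : Set (Finset (Fin G.1))) : Prop where
  mem_union_iff : ∀ η, η ∈ A ∪ B ↔ IsOccurrence H G η
  zeros_disjoint : (⋃ η ∈ A, (↑η : Set (Fin G.1))ᶜ) ∩ (⋃ φ ∈ B, (↑φ : Set (Fin G.1))ᶜ) = ∅
  not_iso_extensions : ¬ ∃ η ∈ A, ∃ φ ∈ B, ∃ i ∉ η, ∃ j ∉ φ,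
    Nonempty (G.2.induce (↑(insert i η) : Set (Fin G.1)) ≃g
              G.2.induce (↑(insert j φ) : Set (Fin G.1)))

def classAbove (H G : FinGraph) (A : Set (Finset (Fin G.1))) : Set FinGraph :=
  {X | StrictlyBetween H G X ∧
    ∃ (e : X.2 ↪g G.2) (s : Finset (Fin X.1)), s.map e.toEmbedding ∈ A}

namespace IsZeroSplitting

variable {A B : Set (Finset (Fin G.1))}

theorem symm (hAB : IsZeroSplitting H G A B) : IsZeroSplitting H G B A where
  mem_union_iff η := Set.union_comm A B ▸ hAB.mem_union_iff η
  zeros_disjoint := Set.inter_comm _ _ ▸ hAB.zeros_disjoint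
  not_iso_extensions := fun ⟨φ, hφ, η, hη, j, hj, i, hi, ⟨g⟩⟩ =>
    hAB.not_iso_extensions ⟨η, hη, φ, hφ, i, hi, j, hj, ⟨g.symm⟩⟩

theorem false_of_map_mem (hAB : IsZeroSplitting H G A B) (hX₁ : H.order < X.order)
    (hX₂ : X.order < G.order) (e₁ e₂ : X.2 ↪g G.2) {s t : Finset (Fin X.1)}
    (hs : s.map e₁.toEmbedding ∈ A) (ht : t.map e₂.toEmbedding ∈ B) : False := by
  have hocc : IsOccurrence H X s :=
    (isOccurrence_map_iff e₁ s).1 ((hAB.mem_union_iff _).1 (Or.inl hs))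
  rcases (hAB.mem_union_iff _).2 ((isOccurrence_map_iff e₂ s).2 hocc) with hA | hB
  · obtain ⟨v, hv⟩ := exists_notMem_of_card_lt_order
      (s := Finset.univ.map e₂.toEmbedding) (by simpa [order] using hX₂)
    have hv' (u : Finset (Fin X.1)) : v ∉ (u.map e₂.toEmbedding : Set (Fin G.1)) :=
      fun h => hv (Finset.map_subset_map.2 u.subset_univ h)
    exact Set.eq_empty_iff_forall_notMem.1 hAB.zeros_disjoint v
      ⟨Set.mem_biUnion hA (hv' s), Set.mem_biUnion ht (hv' t)⟩
  · obtain ⟨i, hi⟩ := exists_notMem_of_card_lt_order (hocc.card ▸ hX₁)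
    refine hAB.not_iso_extensions ⟨_, hs, _, hB, e₁.toEmbedding i, by simpa using hi,
      e₂.toEmbedding i, by simpa using hi, ?_⟩
    rw [← Finset.map_insert, ← Finset.map_insert]
    exact ⟨(e₂.induceMapIso _).symm.comp (e₁.induceMapIso (insert i s))⟩

theorem not_contains (hAB : IsZeroSplitting H G A B) (hX : X ∈ classAbove H G A)
    (hY : Y ∈ classAbove H G B) : ¬ X.Contains Y := by
  intro hXY
  obtain ⟨hXsb, e₁, s, hs⟩ := hX
  obtain ⟨hYsb, e₂, t, ht⟩ := hY
  obtain ⟨hHX, -, hX₁, hX₂⟩ := strictlyBetween_iff.1 hXsb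
  obtain ⟨-, -, hY₁, hY₂⟩ := strictlyBetween_iff.1 hYsb
  obtain ⟨f⟩ := contains_iff_nonempty_embedding.1 hXY
  obtain ⟨u, hu⟩ := exists_isOccurrence hHX
  have hocc : IsOccurrence H G ((u.map f.toEmbedding).map e₂.toEmbedding) :=
    (isOccurrence_map_iff e₂ _).2 ((isOccurrence_map_iff f _).2 hu)
  rcases (hAB.mem_union_iff _).2 hocc with hA | hB
  · exact hAB.false_of_map_mem hY₁ hY₂ e₂ e₂ hA ht
  · rw [Finset.map_map] at hB
    exact hAB.false_of_map_mem hX₁ hX₂ e₁ (e₂.comp f) hs hB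

theorem mem_classAbove_union (hAB : IsZeroSplitting H G A B) (hX : StrictlyBetween H G X) :
    X ∈ classAbove H G A ∪ classAbove H G B := by
  obtain ⟨e⟩ := contains_iff_nonempty_embedding.1 hX.2.1
  obtain ⟨s, hs⟩ := exists_isOccurrence hX.1
  rcases (hAB.mem_union_iff _).2 ((isOccurrence_map_iff e s).2 hs) with h | h
  exacts [Or.inl ⟨hX, e, s, h⟩, Or.inr ⟨hX, e, s, h⟩]

end IsZeroSplitting

variable {A : Set (Finset (Fin G.1))}

theorem classAbove_nonempty (hrank : H.order + 1 < G.order)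
    (hη : IsOccurrence H G η) (hηA : η ∈ A) : (classAbove H G A).Nonempty := by
  have := hη.card
  obtain ⟨i, hi⟩ := exists_notMem_of_card_lt_order (s := η) (by omega)
  have hS : (insert i η).card = H.order + 1 := by rw [Finset.card_insert_of_notMem hi, hη.card]
  obtain ⟨s, hs⟩ := exists_map_induceEmbedding_eq (Finset.subset_insert i η)
  exact ⟨G.induce (insert i η),
    strictlyBetween_induce hη (Finset.subset_insert i η) (by omega) (by omega),
    G.induceEmbedding _, s, hs.symm ▸ hηA⟩

theorem mem_classAbove_of_iso (hX : X ∈ classAbove H G A) (g : X.Iso Y) :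
    Y ∈ classAbove H G A := by
  obtain ⟨hXsb, e, s, hs⟩ := hX
  obtain ⟨g⟩ := g
  refine ⟨hXsb.of_iso ⟨g⟩, e.comp g.symm.toEmbedding, s.map g.toEmbedding.toEmbedding, ?_⟩
  rw [Finset.map_map]
  convert hs using 2
  ext a
  simp

theorem intervalDisconnected_of_stronglyZeroSplit (hrank : H.order + 1 < G.order)
    (h : StronglyZeroSplit H G) : IntervalDisconnected H G := by
  obtain ⟨A, B, ⟨η, hηA⟩, ⟨φ, hφB⟩, -, hocc, hzeros, hext⟩ := h
  have hAB : IsZeroSplitting H G A B := ⟨hocc, hzeros, hext⟩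
  refine ⟨classAbove H G A, classAbove H G B,
    classAbove_nonempty hrank ((hocc η).1 (Or.inl hηA)) hηA,
    classAbove_nonempty hrank ((hocc φ).1 (Or.inr hφB)) hφB,
    Set.disjoint_left.2 fun X hXA hXB => hAB.not_contains hXA hXB (contains_refl X),
    fun X => ⟨fun hX => hX.elim (·.1) (·.1), hAB.mem_classAbove_union⟩,
    fun _ hX _ => mem_classAbove_of_iso hX, fun _ hX _ => mem_classAbove_of_iso hX,
    fun _ hX _ hY => ⟨hAB.not_contains hX hY, hAB.symm.not_contains hY hX⟩⟩

structure IsSeparation (H G : FinGraph) (C D : Set FinGraph) : Prop where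
  mem_union : ∀ X, StrictlyBetween H G X → X ∈ C ∪ D
  not_contains : ∀ X ∈ C, ∀ Y ∈ D, ¬ X.Contains Y ∧ ¬ Y.Contains X

def extensionSide (H G : FinGraph) (C : Set FinGraph) : Set (Finset (Fin G.1)) :=
  {η | IsOccurrence H G η ∧ ∃ i ∉ η, G.induce (insert i η) ∈ C}

namespace IsSeparation

variable {C D : Set FinGraph}

theorem symm (hCD : IsSeparation H G C D) : IsSeparation H G D C where
  mem_union X hX := Set.union_comm C D ▸ hCD.mem_union X hX
  not_contains X hX Y hY := (hCD.not_contains Y hY X hX).symm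

theorem notMem_of_mem (hCD : IsSeparation H G C D) (hX : X ∈ C) : X ∉ D :=
  fun hXD => (hCD.not_contains X hX X hXD).1 (contains_refl X)

theorem mem_of_contains (hCD : IsSeparation H G C D) (hX : X ∈ C) (hXY : X.Contains Y)
    (hY : StrictlyBetween H G Y) : Y ∈ C :=
  (hCD.mem_union Y hY).resolve_right fun hYD => (hCD.not_contains X hX Y hYD).1 hXY

theorem mem_of_contained (hCD : IsSeparation H G C D) (hY : Y ∈ C) (hXY : X.Contains Y)
    (hX : StrictlyBetween H G X) : X ∈ C :=
  (hCD.mem_union X hX).resolve_right fun hXD => (hCD.not_contains Y hY X hXD).2 hXY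

/-- Both one-vertex extensions lie below the two-vertex extension, which is still strictly
between `H` and `G` because `|G| - |H| > 2`. -/
theorem induce_insert_mem (hCD : IsSeparation H G C D) (hrank : H.order + 2 < G.order)
    (hη : IsOccurrence H G η) {i j : Fin G.1} (hi : i ∉ η) (hj : j ∉ η)
    (h : G.induce (insert i η) ∈ C) : G.induce (insert j η) ∈ C := by
  have hcard := hη.card
  have hi' := Finset.card_insert_of_notMem hi
  have hj' := Finset.card_insert_of_notMem hj
  have hT := Finset.card_insert_le j (insert i η)
  have hT' := Finset.card_le_card (Finset.subset_insert j (insert i η))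
  have hTC : G.induce (insert j (insert i η)) ∈ C :=
    hCD.mem_of_contains h (induce_contains_induce (Finset.subset_insert _ _))
      (strictlyBetween_induce hη ((Finset.subset_insert i η).trans (Finset.subset_insert _ _))
        (by omega) (by omega))
  exact hCD.mem_of_contained hTC
    (induce_contains_induce (Finset.insert_subset_insert j (Finset.subset_insert i η)))
    (strictlyBetween_induce hη (Finset.subset_insert j η) (by omega) (by omega))

theorem induce_mem_of_subset (hCD : IsSeparation H G C D) (hrank : H.order + 2 < G.order)
    (hη : η ∈ extensionSide H G C) {S : Finset (Fin G.1)} (hηS : η ⊆ S)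
    (hS₁ : H.order < S.card) (hS₂ : S.card < G.order) : G.induce S ∈ C := by
  obtain ⟨hocc, i, hi, hiC⟩ := hη
  obtain ⟨j, hjS, hj⟩ := Finset.exists_mem_notMem_of_card_lt_card (hocc.card ▸ hS₁)
  exact hCD.mem_of_contains (hCD.induce_insert_mem hrank hocc hi hj hiC)
    (induce_contains_induce (Finset.insert_subset hjS hηS))
    (strictlyBetween_induce hocc hηS hS₁ hS₂)

theorem extensionSide_nonempty (hCD : IsSeparation H G C D) (hX : X ∈ C)
    (hXsb : StrictlyBetween H G X) : (extensionSide H G C).Nonempty := by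
  obtain ⟨hHX, hXG, hX₁, hX₂⟩ := strictlyBetween_iff.1 hXsb
  obtain ⟨e⟩ := contains_iff_nonempty_embedding.1 hXG
  obtain ⟨u, hu⟩ := exists_isOccurrence hHX
  obtain ⟨i, hi⟩ := exists_notMem_of_card_lt_order (hu.card ▸ hX₁)
  have hocc : IsOccurrence H G (u.map e.toEmbedding) := (isOccurrence_map_iff e u).2 hu
  have hcard : (insert i u).card ≤ X.order := by
    simpa [order] using Finset.card_le_univ (insert i u)
  have hcard' := Finset.card_insert_of_notMem hi
  have hu' := hu.card
  refine ⟨u.map e.toEmbedding, hocc, e.toEmbedding i, by simpa using hi, ?_⟩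
  rw [← Finset.map_insert]
  refine hCD.mem_of_contained hX (induce_map_contains e _)
    (strictlyBetween_induce hocc (Finset.map_subset_map.2 (Finset.subset_insert i u)) ?_ ?_) <;>
  · rw [Finset.card_map]; omega

theorem isZeroSplitting (hCD : IsSeparation H G C D) (hrank : H.order + 2 < G.order) :
    IsZeroSplitting H G (extensionSide H G C) (extensionSide H G D) where
  mem_union_iff η := by
    refine ⟨fun h => h.elim (·.1) (·.1), fun hη => ?_⟩
    have hcard := hη.card
    obtain ⟨i, hi⟩ := exists_notMem_of_card_lt_order (s := η) (by omega)
    have hi' := Finset.card_insert_of_notMem hi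
    rcases hCD.mem_union _ (strictlyBetween_induce hη (Finset.subset_insert i η)
      (by omega) (by omega)) with h | h
    exacts [Or.inl ⟨hη, i, hi, h⟩, Or.inr ⟨hη, i, hi, h⟩]
  zeros_disjoint := by
    refine Set.eq_empty_iff_forall_notMem.2 fun v ⟨hvη, hvφ⟩ => ?_
    obtain ⟨η, hη, hvη⟩ := Set.mem_iUnion₂.1 hvη
    obtain ⟨φ, hφ, hvφ⟩ := Set.mem_iUnion₂.1 hvφ
    have hW : (Finset.univ.erase v).card = G.order - 1 := by
      simp [Finset.card_erase_of_mem, order]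
    have hη' := hη.1.card
    have hφ' := hφ.1.card
    have hsub {ψ : Finset (Fin G.1)} (hv : v ∉ (ψ : Set (Fin G.1))) : ψ ⊆ Finset.univ.erase v :=
      fun x hx => Finset.mem_erase.2 ⟨fun h => hv (h ▸ hx), Finset.mem_univ x⟩
    exact hCD.notMem_of_mem
      (hCD.induce_mem_of_subset hrank hη (hsub hvη) (by omega) (by omega))
      (hCD.symm.induce_mem_of_subset hrank hφ (hsub hvφ) (by omega) (by omega))
  not_iso_extensions := by
    rintro ⟨η, hη, φ, hφ, i, hi, j, hj, ⟨g⟩⟩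
    have hη' := Finset.card_insert_of_notMem hi
    have hφ' := Finset.card_insert_of_notMem hj
    have := hη.1.card
    have := hφ.1.card
    have hiC := hCD.induce_mem_of_subset hrank hη (Finset.subset_insert i η) (by omega)
      (by omega)
    have hjD := hCD.symm.induce_mem_of_subset hrank hφ (Finset.subset_insert j φ) (by omega)
      (by omega)
    have hiso : (G.induce (insert i η)).Iso (G.induce (insert j φ)) :=
      ⟨(ofIso _).symm.comp (g.comp (ofIso _))⟩
    exact hCD.notMem_of_mem (hCD.mem_of_contains hiC hiso.contains
      (strictlyBetween_induce hφ.1 (Finset.subset_insert j φ) (by omega) (by omega))) hjD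

end IsSeparation

theorem stronglyZeroSplit_of_intervalDisconnected (hrank : H.order + 2 < G.order)
    (h : IntervalDisconnected H G) : StronglyZeroSplit H G := by
  obtain ⟨C, D, ⟨X, hXC⟩, ⟨Y, hYD⟩, -, hsb, -, -, hsep⟩ := h
  have hCD : IsSeparation H G C D := ⟨fun X => (hsb X).2, hsep⟩
  obtain ⟨hmem, hzeros, hext⟩ := hCD.isZeroSplitting hrank
  refine ⟨_, _, hCD.extensionSide_nonempty hXC ((hsb X).1 (Or.inl hXC)),
    hCD.symm.extensionSide_nonempty hYD ((hsb Y).1 (Or.inr hYD)), ?_, hmem, hzeros, hext⟩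
  refine Set.disjoint_left.2 fun η hηC hηD => ?_
  obtain ⟨hη, i, hi, hiC⟩ := hηC
  have := hη.card
  have := Finset.card_insert_of_notMem hi
  exact hCD.notMem_of_mem hiC
    (hCD.symm.induce_mem_of_subset hrank hηD (Finset.subset_insert i η) (by omega) (by omega))

end FinGraph

theorem interval_disconnected_iff_stronglyZeroSplit_general (H G : FinGraph)
    (hrank : H.order + 2 < G.order) :
    IntervalDisconnected H G ↔ StronglyZeroSplit H G :=
  ⟨FinGraph.stronglyZeroSplit_of_intervalDisconnected hrank,
    FinGraph.intervalDisconnected_of_stronglyZeroSplit (by omega)⟩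

/-- An interval `[H,G]` with `|G| - |H| > 2` is disconnected if and only if it is
strongly zero-split. -/
theorem interval_disconnected_iff_stronglyZeroSplit (H G : FinGraph)
    (hHG : H.Contains G) (hrank : H.order + 2 < G.order) :
    IntervalDisconnected H G ↔ StronglyZeroSplit H G :=
  interval_disconnected_iff_stronglyZeroSplit_general H G hrank
end

section
/- Let G be a finite simple graph. Then G is vertex transitive if and only if for every pair of vertices u, v of G, the vertex-deleted subgraphs G∖u and G∖v are isomorphic. -/
open Finset

namespace VertexDeletedAux

variable {V : Type} [Fintype V] [DecidableEq V] (G : SimpleGraph V) [DecidableRel G.Adj]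

lemma degree_induce_compl (u : V) (x : ({u}ᶜ : Set V)) :
    (G.induce ({u}ᶜ : Set V)).degree x = #((G.neighborFinset x.1).erase u) := by
  rw [← SimpleGraph.card_neighborFinset_eq_degree]
  refine Finset.card_bij (fun y _ => (y : V)) ?_ ?_ ?_
  · rintro ⟨y, hy⟩ hmem
    simp only [SimpleGraph.mem_neighborFinset, SimpleGraph.comap_adj] at hmem
    simp only [Finset.mem_erase, SimpleGraph.mem_neighborFinset]
    exact ⟨hy, hmem⟩
  · rintro ⟨y, hy⟩ _ ⟨z, hz⟩ _ h
    exact Subtype.ext h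
  · intro y hy
    simp only [Finset.mem_erase, SimpleGraph.mem_neighborFinset] at hy
    refine ⟨⟨y, hy.1⟩, ?_, rfl⟩
    simp only [SimpleGraph.mem_neighborFinset, SimpleGraph.comap_adj]
    exact hy.2

lemma sum_degree_induce_compl (u : V) :
    (∑ x : ({u}ᶜ : Set V), (G.induce ({u}ᶜ : Set V)).degree x) + 2 * G.degree u
      = ∑ x : V, G.degree x := by
  have h1 : (∑ x : ({u}ᶜ : Set V), (G.induce ({u}ᶜ : Set V)).degree x)
      = ∑ x ∈ Finset.univ.erase u, #((G.neighborFinset x).erase u) := by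
    rw [Finset.sum_subtype (s := Finset.univ.erase u)
      (p := fun x => x ∈ ({u}ᶜ : Set V)) (by intro x; simp [eq_comm])
      (f := fun x => #((G.neighborFinset x).erase u))]
    exact Finset.sum_congr rfl fun x _ => degree_induce_compl G u x
  have h2 : (∑ x ∈ Finset.univ.erase u, #((G.neighborFinset x).erase u)) + G.degree u
      = ∑ x : V, #((G.neighborFinset x).erase u) := by
    have hu : #((G.neighborFinset u).erase u) = G.degree u := by
      rw [Finset.erase_eq_of_notMem (by simp), SimpleGraph.card_neighborFinset_eq_degree]
    rw [← hu]
    exact Finset.sum_erase_add _ _ (Finset.mem_univ u)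
  have h3 : (∑ x : V, #((G.neighborFinset x).erase u)) + G.degree u = ∑ x : V, G.degree x := by
    have : ∀ x : V, #((G.neighborFinset x).erase u) + (if G.Adj u x then 1 else 0)
        = G.degree x := by
      intro x
      by_cases h : G.Adj u x
      · rw [if_pos h, ← SimpleGraph.card_neighborFinset_eq_degree]
        exact Finset.card_erase_add_one (by simpa [SimpleGraph.mem_neighborFinset]
          using h.symm)
      · rw [if_neg h, Finset.erase_eq_of_notMem
          (by simpa [SimpleGraph.mem_neighborFinset, SimpleGraph.adj_comm] using h),
          SimpleGraph.card_neighborFinset_eq_degree, Nat.add_zero]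
    rw [← Finset.sum_congr rfl fun x _ => this x, Finset.sum_add_distrib]
    congr 1
    have hd : G.degree u = #(Finset.univ.filter (fun x => G.Adj u x)) := by
      rw [← SimpleGraph.card_neighborFinset_eq_degree]
      congr 1
      ext y
      simp [SimpleGraph.mem_neighborFinset]
    rw [hd, Finset.card_filter]
  omega

lemma adj_iff_degree_ne (u : V) (x : ({u}ᶜ : Set V)) :
    G.Adj u x ↔ (G.induce ({u}ᶜ : Set V)).degree x ≠ G.degree x.1 := by
  rw [degree_induce_compl, ← SimpleGraph.card_neighborFinset_eq_degree]
  by_cases h : G.Adj u x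
  · have hmem : u ∈ G.neighborFinset x.1 := by
      simp [SimpleGraph.mem_neighborFinset, h.symm]
    have := Finset.card_erase_add_one hmem
    simp only [h, true_iff]
    omega
  · rw [Finset.erase_eq_of_notMem
      (by simpa [SimpleGraph.mem_neighborFinset, SimpleGraph.adj_comm] using h)]
    simp [h]

end VertexDeletedAux

section IsoDegree

lemma iso_degree_eq {α β : Type} [Fintype α] [Fintype β] {G₁ : SimpleGraph α}
    {G₂ : SimpleGraph β} [DecidableRel G₁.Adj] [DecidableRel G₂.Adj]
    (e : G₁ ≃g G₂) (x : α) : G₂.degree (e x) = G₁.degree x := by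
  rw [← SimpleGraph.card_neighborSet_eq_degree, ← SimpleGraph.card_neighborSet_eq_degree]
  exact Fintype.card_congr (e.mapNeighborSet x).symm

end IsoDegree

namespace VertexDeletedAux

variable {V : Type} [Fintype V] [DecidableEq V] (G : SimpleGraph V) [DecidableRel G.Adj]

lemma degree_eq_of_cards_iso (u v : V)
    (e : G.induce ({u}ᶜ : Set V) ≃g G.induce ({v}ᶜ : Set V)) :
    G.degree u = G.degree v := by
  have hsum : ∑ y : ({v}ᶜ : Set V), (G.induce ({v}ᶜ : Set V)).degree y
      = ∑ x : ({u}ᶜ : Set V), (G.induce ({u}ᶜ : Set V)).degree x := by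
    rw [← Equiv.sum_comp e.toEquiv
      (fun y => (G.induce ({v}ᶜ : Set V)).degree y)]
    exact Finset.sum_congr rfl fun x _ => iso_degree_eq e x
  have h1 := sum_degree_induce_compl G u
  have h2 := sum_degree_induce_compl G v
  omega

end VertexDeletedAux

/-- A finite simple graph is vertex transitive if and only if all of its
vertex-deleted subgraphs are isomorphic. -/
theorem vertexTransitive_iff_vertexDeleted_isomorphic {V : Type} [Fintype V]
    (G : SimpleGraph V) :
    (∀ u v : V, ∃ e : G ≃g G, e u = v) ↔
    (∀ u v : V, Nonempty (G.induce ({u}ᶜ : Set V) ≃g G.induce ({v}ᶜ : Set V))) := by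
  classical
  constructor
  · -- easy direction: an automorphism sending u to v restricts to the cards
    intro h u v
    obtain ⟨e, he⟩ := h u v
    refine ⟨⟨Equiv.subtypeEquiv e.toEquiv fun x => ?_, ?_⟩⟩
    · simp only [Set.mem_compl_iff, Set.mem_singleton_iff]
      rw [← he]
      exact not_congr (Iff.symm (EmbeddingLike.apply_eq_iff_eq e.toEquiv))
    · intro a b
      simpa using e.map_adj_iff
  · -- hard direction
    intro h u v
    have hreg : ∀ w : V, G.degree w = G.degree u := fun w =>
      VertexDeletedAux.degree_eq_of_cards_iso G w u (h w u).some
    obtain ⟨e⟩ := h u v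
    have key : ∀ x : ({u}ᶜ : Set V), (G.Adj u x ↔ G.Adj v (e x)) := by
      intro x
      rw [VertexDeletedAux.adj_iff_degree_ne G u x,
        VertexDeletedAux.adj_iff_degree_ne G v (e x), iso_degree_eq e x,
        hreg x.1, hreg (e x).1]
    have hne : ∀ (z : V) (hz : ¬ z = u), z ∈ ({u}ᶜ : Set V) := by
      intro z hz; simpa using hz
    have hne' : ∀ (z : V) (hz : ¬ z = v), z ∈ ({v}ᶜ : Set V) := by
      intro z hz; simpa using hz
    have hev : ∀ x : ({u}ᶜ : Set V), ¬ ((e x : V) = v) := fun x => (e x).2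
    have heu : ∀ y : ({v}ᶜ : Set V), ¬ ((e.symm y : V) = u) := fun y => (e.symm y).2
    refine ⟨⟨⟨fun z => if hz : z = u then v else (e ⟨z, hne z hz⟩ : V),
      fun z => if hz : z = v then u else (e.symm ⟨z, hne' z hz⟩ : V), ?_, ?_⟩, ?_⟩, ?_⟩
    · intro z
      by_cases hz : z = u
      · subst hz; simp
      · simp only [dif_neg hz, dif_neg (hev ⟨z, hne z hz⟩)]
        simp
    · intro z
      by_cases hz : z = v
      · subst hz; simp
      · simp only [dif_neg hz, dif_neg (heu ⟨z, hne' z hz⟩)]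
        simp
    · intro a b
      by_cases ha : a = u <;> by_cases hb : b = u
      · subst ha; subst hb; simp
      · subst ha
        simp only [Equiv.coe_fn_mk, dif_pos rfl, dif_neg hb]
        exact (key ⟨b, hne b hb⟩).symm
      · subst hb
        simp only [Equiv.coe_fn_mk, dif_pos rfl, dif_neg ha]
        exact (G.adj_comm _ _).trans ((key ⟨a, hne a ha⟩).symm.trans (G.adj_comm _ _))
      · simp only [Equiv.coe_fn_mk, dif_neg ha, dif_neg hb]
        have := e.map_adj_iff (v := ⟨a, hne a ha⟩) (w := ⟨b, hne b hb⟩)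
        simpa using this
    · simp
end
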